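/- Let k be a non-negative integer and let P be a finite propositional logic program such that every atom occurring negated in P is the head of some rule of P (Neg(P) ⊆ h(P)). Let P^k be the program consisting of all rules r of P with |b⁻(r)| ≤ k. If M is a stable model of P^k with |M| ≥ |P| − k, then the number of distinct atoms occurring negated in the bodies of rules of P^k is at most k + k². -/

import Mathlib

/-! Each atom of `M` is the head of a rule of `P^k` whose negative body avoids `M`, so
these rules number at least `|M| ≥ |P| - k`. Hence at most `k` rules of `P^k` have a
negative body meeting `M`, and they contribute at most `k²` negated atoms inside `M`;
and at most `k` rules of `P` have their head outside `M`, while by `Neg(P) ⊆ h(P)` every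
negated atom outside `M` is such a head. -/

open scoped Classical

noncomputable section

/-- A propositional logic program rule: a head atom, a finite positive body and a
finite negative body. -/
structure LPRule (α : Type) where
  head : α
  pos : Finset α
  neg : Finset α
deriving DecidableEq

/-- A logic program is a finite set of rules. -/
abbrev LProgram (α : Type) := Finset (LPRule α)

variable {α : Type} [DecidableEq α]

/-- `horn r`: the Horn rule with the same head and positive body as `r`
and empty negative body. -/
def LPRule.horn (r : LPRule α) : LPRule α := ⟨r.head, r.pos, ∅⟩

/-- A rule `r` is proper if `h(r) ∉ b⁺(r)` and `b⁺(r) ∩ b⁻(r) = ∅`. -/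
def LPRule.proper (r : LPRule α) : Prop := r.head ∉ r.pos ∧ r.pos ∩ r.neg = ∅

/-- `At(P)`: the set of atoms occurring in `P`. -/
def atomsP (P : LProgram α) : Finset α := P.sup (fun r => insert r.head (r.pos ∪ r.neg))

/-- `h(P)`: the set of heads of rules of `P`. -/
def headsP (P : LProgram α) : Finset α := P.image LPRule.head

/-- `Neg(P)`: the set of atoms occurring negated in `P`. -/
def negP (P : LProgram α) : Finset α := P.sup LPRule.neg

/-- The least model of a (Horn) program `Q`, given as a set of rules (negative bodies
are ignored; Horn rules have empty negative bodies): the least set `M` of atoms such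
that `h(r) ∈ M` whenever `r ∈ Q` and `b⁺(r) ⊆ M`. -/
def LM (Q : Set (LPRule α)) : Set α :=
  ⋂₀ {M : Set α | ∀ r ∈ Q, (↑r.pos : Set α) ⊆ M → r.head ∈ M}

/-- The reduct `P^S`: delete every rule whose negative body meets `S` and remove the
negative bodies of the remaining rules. -/
def reduct (P : LProgram α) (S : Set α) : Set (LPRule α) :=
  LPRule.horn '' {r | r ∈ P ∧ (↑r.neg : Set α) ∩ S = ∅}

/-- `M` is a stable model of `P` if `M = LM (P^M)`. -/
def isStable (P : LProgram α) (M : Set α) : Prop :=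
  M = LM (reduct P M)

theorem LM_subset_image_head {β : Type} (Q : Set (LPRule β)) : LM Q ⊆ LPRule.head '' Q :=
  fun _ ha => Set.mem_sInter.mp ha _ fun r hr _ => ⟨r, hr, rfl⟩

theorem headsP_mono {P Q : LProgram α} (h : P ⊆ Q) : headsP P ⊆ headsP Q :=
  Finset.image_subset_image h

theorem negP_mono {P Q : LProgram α} (h : P ⊆ Q) : negP P ⊆ negP Q :=
  Finset.sup_mono h

theorem card_headsP_le (P : LProgram α) : (headsP P).card ≤ P.card :=
  Finset.card_image_le

theorem card_negP_le {P : LProgram α} {k : ℕ} (h : ∀ r ∈ P, r.neg.card ≤ k) :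
    (negP P).card ≤ P.card * k := by
  rw [negP, Finset.sup_eq_biUnion]
  exact Finset.card_biUnion_le_card_mul _ _ _ h

theorem isStable.subset_headsP {P : LProgram α} {M : Finset α} (h : isStable P M) :
    M ⊆ headsP (P.filter fun r => Disjoint r.neg M) := by
  intro a ha
  have ha' : a ∈ LM (reduct P M) := h ▸ Finset.mem_coe.mpr ha
  obtain ⟨_, ⟨r, ⟨hrP, hdisj⟩, rfl⟩, rfl⟩ := LM_subset_image_head _ ha'
  refine Finset.mem_image.mpr ⟨r, Finset.mem_filter.mpr ⟨hrP, ?_⟩, rfl⟩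
  exact Finset.disjoint_coe.mp (Set.disjoint_iff_inter_eq_empty.mpr hdisj)

theorem card_add_card_filter_not_le {P : LProgram α} {M : Finset α} {p : LPRule α → Prop}
    [DecidablePred p] (h : M ⊆ headsP (P.filter p)) :
    M.card + (P.filter fun r => ¬ p r).card ≤ P.card :=
  calc M.card + (P.filter fun r => ¬ p r).card
      ≤ (P.filter p).card + (P.filter fun r => ¬ p r).card :=
        Nat.add_le_add_right ((Finset.card_le_card h).trans (card_headsP_le _)) _
    _ = P.card := Finset.card_filter_add_card_filter_not p

theorem filter_subset_headsP_filter {P : LProgram α} {S : Finset α} (h : S ⊆ headsP P)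
    (q : α → Prop) [DecidablePred q] : S.filter q ⊆ headsP (P.filter fun r => q r.head) := by
  intro a ha
  obtain ⟨haS, hqa⟩ := Finset.mem_filter.mp ha
  obtain ⟨r, hrP, rfl⟩ := Finset.mem_image.mp (h haS)
  exact Finset.mem_image_of_mem _ (Finset.mem_filter.mpr ⟨hrP, hqa⟩)

theorem negP_inter_subset (P : LProgram α) (M : Finset α) :
    negP P ∩ M ⊆ negP (P.filter fun r => ¬ Disjoint r.neg M) := by
  intro a ha
  obtain ⟨haN, haM⟩ := Finset.mem_inter.mp ha
  obtain ⟨r, hrP, har⟩ := Finset.mem_sup.mp haN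
  exact Finset.mem_sup.mpr
    ⟨r, Finset.mem_filter.mpr ⟨hrP, Finset.not_disjoint_iff.mpr ⟨a, har, haM⟩⟩, har⟩

/-- if every atom occurring negated in `P` is the head of some rule of `P`,
`P^k` consists of the rules of `P` with at most `k` negated atoms in the body, and `M`
is a stable model of `P^k` with `|M| ≥ |P| - k`, then the number of distinct atoms
occurring negated in `P^k` is at most `k + k²`. -/
theorem card_negAtoms_le (k : ℕ) (P : LProgram α)
    (hneg : negP P ⊆ headsP P)
    (M : Finset α)
    (hstable : isStable (P.filter (fun r => r.neg.card ≤ k)) ↑M)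
    (hcard : P.card ≤ M.card + k) :
    (negP (P.filter (fun r => r.neg.card ≤ k))).card ≤ k + k ^ 2 := by
  set Pk := P.filter (fun r => r.neg.card ≤ k)
  set N := negP Pk
  have hPk : Pk ⊆ P := Finset.filter_subset _ _
  have hPkcard : Pk.card ≤ P.card := Finset.card_le_card hPk
  have hsupp := hstable.subset_headsP
  have hblocked := card_add_card_filter_not_le hsupp
  have hM : M ⊆ headsP P := hsupp.trans (headsP_mono ((Finset.filter_subset _ _).trans hPk))
  have houter := card_add_card_filter_not_le (p := fun r => r.head ∈ M)
    (by simpa using filter_subset_headsP_filter hM (· ∈ M))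
  have hin : (N ∩ M).card ≤ k * k :=
    calc (N ∩ M).card ≤ (negP (Pk.filter fun r => ¬ Disjoint r.neg M)).card :=
          Finset.card_le_card (negP_inter_subset Pk M)
      _ ≤ (Pk.filter fun r => ¬ Disjoint r.neg M).card * k :=
          card_negP_le fun r hr => (Finset.mem_filter.mp (Finset.mem_filter.mp hr).1).2
      _ ≤ k * k := Nat.mul_le_mul_right k (by omega)
  have hout : (N \ M).card ≤ k :=
    calc (N \ M).card ≤ (headsP (P.filter fun r => r.head ∉ M)).card := by
          refine Finset.card_le_card ?_
          simpa [Finset.sdiff_eq_filter] using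
            filter_subset_headsP_filter ((negP_mono hPk).trans hneg) (· ∉ M)
      _ ≤ k := (card_headsP_le _).trans (by omega)
  calc N.card = (N \ M).card + (N ∩ M).card := (Finset.card_sdiff_add_card_inter N M).symm
    _ ≤ k + k * k := Nat.add_le_add hout hin
    _ = k + k ^ 2 := by rw [sq]
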